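/- arXiv:math/9506221 — 3 statements merged into one kernel-verified Lean document; each statement's English description precedes it below -/
import Mathlib

section
/- Let E, F be Banach spaces and f : E → F a C¹ map with first-order Taylor expansion f(ξ) = f(0) + Df(0)ξ + N(ξ), where Df(0) has a bounded right inverse G and there is a constant C > 0 such that ‖G N(ξ) − G N(ζ)‖ ≤ C(‖ξ‖ + ‖ζ‖)‖ξ − ζ‖ for all ξ, ζ ∈ E. Set δ₁ = (8C)⁻¹. If ‖G f(0)‖ ≤ δ₁/3, then for every ξ in ker Df(0) with ‖ξ‖ < δ₁ there exists φ(ξ) ∈ Im G with f(ξ + φ(ξ)) = 0 and ‖φ(ξ)‖ ≤ (4/3)‖G f(0)‖ + (1/3)‖ξ‖. -/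
/-!
Look for the correction as a fixed point of `T φ = -G (f 0) - G (N (ξ + φ))`. Such a `φ` lies in
`Im G`, and applying `D` (with `D ∘ G = id` and `D ξ = 0`) turns `f (ξ + φ) = f 0 + D φ + N (ξ + φ)`
into `0`. Since `G ∘ N` vanishes at `0` and is quadratically Lipschitz, on the closed ball of radius
`r = (4/3) ‖G (f 0)‖ + (1/3) ‖ξ‖` the map `T` is a self-map with Lipschitz constant
`2 C (‖ξ‖ + r) ≤ 4/9`, so Banach's fixed point theorem produces `φ`.
-/

open Metric Set

section RadiusEstimates

variable {C a s : ℝ}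

lemma add_mul_sq_add_radius_le (ha : 0 ≤ a) (hs : 0 ≤ s) (hCa : C * a ≤ 1 / 24)
    (hCs : C * s ≤ 1 / 8) :
    a + C * (s + (4 / 3 * a + 1 / 3 * s)) ^ 2 ≤ 4 / 3 * a + 1 / 3 * s := by
  -- `s + r = (4/3) (a + s)` for the radius `r`, and `C (a + s) ≤ 1/6`
  have hsum : C * (a + s) * (a + s) ≤ 1 / 6 * (a + s) :=
    mul_le_mul_of_nonneg_right (by linarith) (by linarith)
  nlinarith

lemma two_mul_mul_add_radius_le (hCa : C * a ≤ 1 / 24) (hCs : C * s ≤ 1 / 8) :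
    2 * C * (s + (4 / 3 * a + 1 / 3 * s)) ≤ 4 / 9 := by
  linarith

end RadiusEstimates

lemma norm_le_mul_sq_of_norm_sub_le {E E' : Type*} [SeminormedAddCommGroup E]
    [SeminormedAddCommGroup E'] {Q : E → E'} {C : ℝ} (hQ0 : Q 0 = 0)
    (hQ : ∀ x y, ‖Q x - Q y‖ ≤ C * (‖x‖ + ‖y‖) * ‖x - y‖) (x : E) :
    ‖Q x‖ ≤ C * ‖x‖ ^ 2 := by
  simpa [hQ0, sq, mul_assoc] using hQ x 0

section FixedPoint

variable {E : Type*} [NormedAddCommGroup E] {Q : E → E} {C : ℝ} {y ξ : E}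

lemma mapsTo_closedBall_neg_sub_apply_add (hC : 0 ≤ C) (hQ0 : Q 0 = 0)
    (hQ : ∀ x z, ‖Q x - Q z‖ ≤ C * (‖x‖ + ‖z‖) * ‖x - z‖)
    (hy : C * ‖y‖ ≤ 1 / 24) (hξ : C * ‖ξ‖ ≤ 1 / 8) :
    MapsTo (fun φ ↦ -y - Q (ξ + φ)) (closedBall 0 (4 / 3 * ‖y‖ + 1 / 3 * ‖ξ‖))
      (closedBall 0 (4 / 3 * ‖y‖ + 1 / 3 * ‖ξ‖)) := by
  intro φ hφ
  rw [mem_closedBall_zero_iff] at hφ ⊢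
  have hξφ : ‖ξ + φ‖ ≤ ‖ξ‖ + (4 / 3 * ‖y‖ + 1 / 3 * ‖ξ‖) := (norm_add_le _ _).trans (by linarith)
  calc ‖-y - Q (ξ + φ)‖ ≤ ‖y‖ + C * ‖ξ + φ‖ ^ 2 := by
        grw [norm_sub_le, norm_neg, norm_le_mul_sq_of_norm_sub_le hQ0 hQ]
    _ ≤ ‖y‖ + C * (‖ξ‖ + (4 / 3 * ‖y‖ + 1 / 3 * ‖ξ‖)) ^ 2 := by gcongr
    _ ≤ 4 / 3 * ‖y‖ + 1 / 3 * ‖ξ‖ := add_mul_sq_add_radius_le (norm_nonneg _) (norm_nonneg _) hy hξ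

lemma lipschitzOnWith_closedBall_neg_sub_apply_add (hC : 0 ≤ C)
    (hQ : ∀ x z, ‖Q x - Q z‖ ≤ C * (‖x‖ + ‖z‖) * ‖x - z‖)
    (hy : C * ‖y‖ ≤ 1 / 24) (hξ : C * ‖ξ‖ ≤ 1 / 8) :
    LipschitzOnWith (4 / 9) (fun φ ↦ -y - Q (ξ + φ))
      (closedBall 0 (4 / 3 * ‖y‖ + 1 / 3 * ‖ξ‖)) := by
  refine LipschitzOnWith.of_dist_le_mul fun φ hφ ψ hψ ↦ ?_
  rw [mem_closedBall_zero_iff] at hφ hψ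
  have hξφ : ‖ξ + φ‖ ≤ ‖ξ‖ + (4 / 3 * ‖y‖ + 1 / 3 * ‖ξ‖) := (norm_add_le _ _).trans (by linarith)
  have hξψ : ‖ξ + ψ‖ ≤ ‖ξ‖ + (4 / 3 * ‖y‖ + 1 / 3 * ‖ξ‖) := (norm_add_le _ _).trans (by linarith)
  rw [dist_eq_norm, dist_eq_norm]
  calc ‖-y - Q (ξ + φ) - (-y - Q (ξ + ψ))‖ = ‖Q (ξ + φ) - Q (ξ + ψ)‖ := by
        rw [← norm_neg]; congr 1; abel
    _ ≤ C * (‖ξ + φ‖ + ‖ξ + ψ‖) * ‖(ξ + φ) - (ξ + ψ)‖ := hQ _ _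
    _ ≤ C * (2 * (‖ξ‖ + (4 / 3 * ‖y‖ + 1 / 3 * ‖ξ‖))) * ‖φ - ψ‖ := by
        rw [add_sub_add_left_eq_sub]; gcongr; linarith
    _ ≤ (4 / 9 : NNReal) * ‖φ - ψ‖ := by
        push_cast; rw [← mul_assoc, mul_comm C 2]; gcongr; exact two_mul_mul_add_radius_le hy hξ

theorem exists_eq_neg_sub_apply_add [CompleteSpace E] (hC : 0 ≤ C) (hQ0 : Q 0 = 0)
    (hQ : ∀ x z, ‖Q x - Q z‖ ≤ C * (‖x‖ + ‖z‖) * ‖x - z‖)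
    (hy : C * ‖y‖ ≤ 1 / 24) (hξ : C * ‖ξ‖ ≤ 1 / 8) :
    ∃ φ, φ = -y - Q (ξ + φ) ∧ ‖φ‖ ≤ 4 / 3 * ‖y‖ + 1 / 3 * ‖ξ‖ := by
  have hmaps := mapsTo_closedBall_neg_sub_apply_add hC hQ0 hQ hy hξ
  have hcontr : ContractingWith (4 / 9) (hmaps.restrict _ _ _) :=
    ⟨by norm_num, (lipschitzOnWith_closedBall_neg_sub_apply_add hC hQ hy hξ).mapsToRestrict hmaps⟩
  obtain ⟨φ, hφ, hfix, -⟩ := hcontr.exists_fixedPoint' isClosed_closedBall.isComplete hmaps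
    (mem_closedBall_self (by positivity)) (edist_ne_top _ _)
  exact ⟨φ, hfix.symm, mem_closedBall_zero_iff.mp hφ⟩

end FixedPoint

theorem stmt_0_general {E F : Type*} [NormedAddCommGroup E] [NormedSpace ℝ E] [CompleteSpace E]
    [NormedAddCommGroup F] [NormedSpace ℝ F]
    (f : E → F)
    (D : E →L[ℝ] F) (G : F →L[ℝ] E)
    (hG : ∀ y, D (G y) = y)
    (N : E → F)
    (hexp : ∀ ξ, f ξ = f 0 + D ξ + N ξ)
    (C : ℝ) (hC : 0 < C)
    (hN : ∀ ξ ζ : E, ‖G (N ξ) - G (N ζ)‖ ≤ C * (‖ξ‖ + ‖ζ‖) * ‖ξ - ζ‖)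
    (hsmall : ‖G (f 0)‖ ≤ (8 * C)⁻¹ / 3) :
    ∀ ξ ∈ LinearMap.ker (D : E →ₗ[ℝ] F), ‖ξ‖ < (8 * C)⁻¹ →
      ∃ φ ∈ Set.range G, f (ξ + φ) = 0 ∧
        ‖φ‖ ≤ (4 / 3) * ‖G (f 0)‖ + (1 / 3) * ‖ξ‖ := by
  intro ξ hξker hξ
  have hN0 : G (N 0) = 0 := by simpa using congrArg G (hexp 0)
  have hCinv : C * (8 * C)⁻¹ = 1 / 8 := by field_simp
  have hy : C * ‖G (f 0)‖ ≤ 1 / 24 := by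
    nlinarith [mul_le_mul_of_nonneg_left hsmall hC.le]
  have hξ' : C * ‖ξ‖ ≤ 1 / 8 := hCinv ▸ mul_le_mul_of_nonneg_left hξ.le hC.le
  obtain ⟨φ, hfix, hφ⟩ := exists_eq_neg_sub_apply_add (Q := fun x ↦ G (N x)) hC.le hN0 hN hy hξ'
  have hφG : φ = G (-(f 0 + N (ξ + φ))) := by rw [map_neg, map_add, neg_add', ← hfix]
  refine ⟨φ, ⟨_, hφG.symm⟩, ?_, hφ⟩
  have hDξ : D ξ = 0 := hξker
  have hDφ : D φ = -(f 0 + N (ξ + φ)) := by rw [← hG (-(f 0 + N (ξ + φ))), ← hφG]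
  rw [hexp, map_add, hDξ, hDφ]
  abel

/-- Quantitative inverse function theorem in Banach spaces (Lemma 6.1.2). -/
theorem stmt_0 {E F : Type*} [NormedAddCommGroup E] [NormedSpace ℝ E] [CompleteSpace E]
    [NormedAddCommGroup F] [NormedSpace ℝ F] [CompleteSpace F]
    (f : E → F) (hf : ContDiff ℝ 1 f)
    (D : E →L[ℝ] F) (G : F →L[ℝ] E)
    (hG : ∀ y, D (G y) = y)
    (N : E → F)
    (hexp : ∀ ξ, f ξ = f 0 + D ξ + N ξ)
    (C : ℝ) (hC : 0 < C)
    (hN : ∀ ξ ζ : E, ‖G (N ξ) - G (N ζ)‖ ≤ C * (‖ξ‖ + ‖ζ‖) * ‖ξ - ζ‖)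
    (hsmall : ‖G (f 0)‖ ≤ (8 * C)⁻¹ / 3) :
    ∀ ξ ∈ LinearMap.ker (D : E →ₗ[ℝ] F), ‖ξ‖ < (8 * C)⁻¹ →
      ∃ φ ∈ Set.range G, f (ξ + φ) = 0 ∧
        ‖φ‖ ≤ (4 / 3) * ‖G (f 0)‖ + (1 / 3) * ‖ξ‖ :=
  stmt_0_general f D G hG N hexp C hC hN hsmall
end

section
/- With notation as above, let χ : ℝ → [0,1] be defined by χ(s) = F(s)/F(s₀) for s₀ ≤ s ≤ s*, χ(s) = 1 for s ≤ s₀, χ(s) = 0 for s ≥ s*. Define (g_Y)_{θθ} by (g_Y)_{θθ} − (g_ε)_{θθ} = ε⁻² χ(s) F(s) (g_ε)_{θθ}. Then ‖g_Y − g_ε‖_{C⁰} ≤ 4 |s₁²/s₀² − 1| (measured relative to (g_ε)_{θθ}), and consequently for every ε > 0 there exists S₀ > 1 such that for 1 < S ≤ S₀, ‖g_Y − g_ε‖_{C⁰} ≤ C max{S² − 1, |S⁻² − 1|} · ε < ε. -/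
set_option maxHeartbeats 1000000


/-- Lemma 6.2.14: the cutoff `χ` built from the interpolation function `F` satisfies the
relative `C⁰` bound `sup_s ε⁻²|χ(s)F(s)| ≤ 4|s₁²/s₀² − 1|` on the overlap region
(the relative difference of the metrics `g_Y` and `g_ε`), and consequently there is a
constant `C` such that this is at most `C·max{S²−1, |S⁻²−1|}·ε`, which for every `ε' > 0`
can be made `< ε'` by taking `1 < S ≤ S₀` with `S₀` close enough to `1`. -/
theorem stmt_10 (ε S : ℝ) (hε : 0 < ε) (hS : 1 < S) (hSε : S * ε < 1 / 100)
    (s₀ s₁ : ℝ) (hs₀ : s₀ = -1 + S⁻¹ * ε) (hs₁ : s₁ = -1 + S * ε)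
    (φ₁ : ℝ → ℝ) (hφ : ContDiff ℝ (⊤ : ℕ∞) φ₁)
    (h1 : ∀ s : ℝ, 1 - S⁻¹ * ε ≤ |s| → φ₁ s = 1)
    (h2 : ∀ s : ℝ, |s| ≤ 1 - S * ε → φ₁ s = ε ^ 2)
    (F : ℝ → ℝ)
    (hF : ∀ s, F s = ((-s + s₀ + s₁) / s) ^ 2 * φ₁ (-s + s₀ + s₁) - ε ^ 2)
    (hmono : MonotoneOn F (Set.Icc s₀ s₁))
    (hFs₀ : F s₀ < 0) (hFs₁ : 0 < F s₁)
    (sstar : ℝ) (hsstar : sstar ∈ Set.Ioo s₀ s₁) (hFstar : F sstar = 0)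
    (χ : ℝ → ℝ)
    (hχ : ∀ s, χ s = if s ≤ s₀ then 1 else if s ≤ sstar then F s / F s₀ else 0) :
    (∀ s ∈ Set.Icc s₀ s₁, ε⁻¹ ^ 2 * |χ s * F s| ≤ 4 * |s₁ ^ 2 / s₀ ^ 2 - 1|) ∧
    ∃ Cc > 0, 4 * |s₁ ^ 2 / s₀ ^ 2 - 1| ≤ Cc * max (S ^ 2 - 1) |S⁻¹ ^ 2 - 1| * ε ∧
      ∀ ε' > 0, ∃ S₀ > 1, ∀ S' : ℝ, 1 < S' → S' ≤ S₀ →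
        Cc * max (S' ^ 2 - 1) |S'⁻¹ ^ 2 - 1| * ε' < ε' := by
  have hS0 : (0:ℝ) < S := lt_trans one_pos hS
  have hu0 : 0 < S⁻¹ := inv_pos.mpr hS0
  have hu1 : S⁻¹ < 1 := by
    rw [inv_lt_one_iff₀]; right; exact hS
  have huS : S⁻¹ * S = 1 := inv_mul_cancel₀ (ne_of_gt hS0)
  have hε1 : ε < 1 / 100 := by
    have := mul_lt_mul_of_pos_right hS hε
    linarith [this]
  have huε : S⁻¹ * ε < 1 / 100 := by
    have := mul_lt_mul_of_pos_right hu1 hε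
    linarith [this]
  have hεS : ε < S * ε := by
    have := mul_lt_mul_of_pos_right hS hε; linarith
  have huεε : S⁻¹ * ε < ε := by
    have := mul_lt_mul_of_pos_right hu1 hε; linarith
  have hs01 : s₀ < s₁ := by
    rw [hs₀, hs₁]; linarith
  have hφs₁ : φ₁ s₁ = ε ^ 2 := by
    apply h2
    rw [hs₁, abs_of_nonpos (by linarith)]
    linarith
  have hFs0 : F s₀ = ε ^ 2 * (s₁ ^ 2 / s₀ ^ 2 - 1) := by
    rw [hF]
    have e : -s₀ + s₀ + s₁ = s₁ := by ring
    rw [e, hφs₁, div_pow]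
    ring
  set A := s₁ ^ 2 / s₀ ^ 2 - 1 with hA
  have hAabs : |F s₀| = ε ^ 2 * |A| := by
    rw [hFs0, abs_mul, abs_of_pos (pow_pos hε 2)]
  have hεinv : ε⁻¹ ^ 2 * ε ^ 2 = 1 := by
    field_simp
  constructor
  · intro s hs
    rw [hχ]
    by_cases hle : s ≤ s₀
    · have hseq : s = s₀ := le_antisymm hle hs.1
      rw [if_pos hle, one_mul, hseq, hAabs, ← mul_assoc, hεinv, one_mul]
      linarith [abs_nonneg A]
    · rw [if_neg hle]
      push_neg at hle
      by_cases hle2 : s ≤ sstar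
      · rw [if_pos hle2]
        have hsI : s ∈ Set.Icc s₀ s₁ := hs
        have hstI : sstar ∈ Set.Icc s₀ s₁ := ⟨hsstar.1.le, hsstar.2.le⟩
        have hFle : F s ≤ 0 := hFstar ▸ hmono hsI hstI hle2
        have hFge : F s₀ ≤ F s := hmono ⟨le_rfl, hs01.le⟩ hsI hs.1
        have habs : |F s| ≤ |F s₀| := by
          rw [abs_of_nonpos hFle, abs_of_nonpos hFs₀.le]; linarith
        have hpos : 0 < |F s₀| := abs_pos.mpr (ne_of_lt hFs₀)
        have e1 : |F s / F s₀ * F s| = |F s| * |F s| / |F s₀| := by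
          rw [abs_mul, abs_div]; ring
        rw [e1]
        have e2 : |F s| * |F s| / |F s₀| ≤ |F s₀| := by
          rw [div_le_iff₀ hpos]
          exact mul_le_mul habs habs (abs_nonneg _) (abs_nonneg _)
        calc ε⁻¹ ^ 2 * (|F s| * |F s| / |F s₀|) ≤ ε⁻¹ ^ 2 * |F s₀| := by
              apply mul_le_mul_of_nonneg_left e2 (by positivity)
          _ = |A| := by rw [hAabs, ← mul_assoc, hεinv, one_mul]
          _ ≤ 4 * |A| := by linarith [abs_nonneg A]
      · rw [if_neg hle2, zero_mul, abs_zero, mul_zero]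
        positivity
  · refine ⟨12, by norm_num, ?_, ?_⟩
    · -- 4|A| ≤ 12 * max (S²-1) |S⁻²-1| * ε
      have hs₀sq : (49/50 : ℝ) ≤ s₀ ^ 2 := by
        have e : s₀ ^ 2 = 1 - 2 * (S⁻¹ * ε) + (S⁻¹ * ε) ^ 2 := by rw [hs₀]; ring
        rw [e]
        linarith [sq_nonneg (S⁻¹ * ε)]
      have hs₀pos : (0:ℝ) < s₀ ^ 2 := by linarith
      have hx0 : 0 < 2 - (S + S⁻¹) * ε := by
        have e : (S + S⁻¹) * ε = S * ε + S⁻¹ * ε := by ring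
        rw [e]; linarith
      have hSsq : 0 < S ^ 2 - 1 := by nlinarith [sq_nonneg (S - 1)]
      have hSu0 : 0 < S - S⁻¹ := by linarith
      have expand : s₀ ^ 2 - s₁ ^ 2 = ε * (S - S⁻¹) * (2 - (S + S⁻¹) * ε) := by
        rw [hs₀, hs₁]; ring
      have hAneg : A ≤ 0 := by
        rw [hA, sub_nonpos, div_le_one hs₀pos]
        nlinarith [mul_pos (mul_pos hε hSu0) hx0]
      have hkey : s₀ ^ 2 - s₁ ^ 2 ≤ 3 * (S ^ 2 - 1) * ε * s₀ ^ 2 := by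
        have hSu : S - S⁻¹ = S⁻¹ * (S ^ 2 - 1) := by
          field_simp
        rw [expand, hSu]
        have hbound : S⁻¹ * (2 - (S + S⁻¹) * ε) ≤ 3 * s₀ ^ 2 := by
          have hux : 0 ≤ S⁻¹ * ((S + S⁻¹) * ε) := by positivity
          have e : S⁻¹ * (2 - (S + S⁻¹) * ε)
              = 2 * S⁻¹ - S⁻¹ * ((S + S⁻¹) * ε) := by ring
          rw [e]; linarith
        have e2 : ε * (S⁻¹ * (S ^ 2 - 1)) * (2 - (S + S⁻¹) * ε)
            = (ε * (S ^ 2 - 1)) * (S⁻¹ * (2 - (S + S⁻¹) * ε)) := by ring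
        have e3 : 3 * (S ^ 2 - 1) * ε * s₀ ^ 2 = (ε * (S ^ 2 - 1)) * (3 * s₀ ^ 2) := by ring
        rw [e2, e3]
        exact mul_le_mul_of_nonneg_left hbound (mul_pos hε hSsq).le
      have hAbound : |A| ≤ 3 * (S ^ 2 - 1) * ε := by
        rw [abs_of_nonpos hAneg, hA, neg_sub]
        have e : 1 - s₁ ^ 2 / s₀ ^ 2 = (s₀ ^ 2 - s₁ ^ 2) / s₀ ^ 2 := by
          rw [sub_div, div_self (ne_of_gt hs₀pos)]
        rw [e, div_le_iff₀ hs₀pos]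
        exact hkey
      have hmax : S ^ 2 - 1 ≤ max (S ^ 2 - 1) |S⁻¹ ^ 2 - 1| := le_max_left _ _
      calc 4 * |A| ≤ 12 * (S ^ 2 - 1) * ε := by linarith
        _ ≤ 12 * max (S ^ 2 - 1) |S⁻¹ ^ 2 - 1| * ε := by
            apply mul_le_mul_of_nonneg_right _ hε.le
            linarith
    · intro ε' hε'
      refine ⟨101/100, by norm_num, ?_⟩
      intro S' h1' h2'
      have hS'0 : (0:ℝ) < S' := lt_trans one_pos h1'
      have hinv : S'⁻¹ * S' = 1 := inv_mul_cancel₀ (ne_of_gt hS'0)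
      have hinv0 : 0 < S'⁻¹ := inv_pos.mpr hS'0
      have hinv1 : S'⁻¹ < 1 := by rw [inv_lt_one_iff₀]; right; exact h1'
      have hv1 : S'⁻¹ * S'⁻¹ < 1 := by
        have h1 := mul_lt_mul_of_pos_left hinv1 hinv0
        rw [mul_one] at h1; linarith
      have habs : |S'⁻¹ ^ 2 - 1| ≤ S' ^ 2 - 1 := by
        rw [abs_of_nonpos (by rw [sq]; linarith)]
        nlinarith [sq_nonneg (S' - S'⁻¹)]
      have hmax : max (S' ^ 2 - 1) |S'⁻¹ ^ 2 - 1| = S' ^ 2 - 1 := max_eq_left habs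
      rw [hmax]
      have hb : S' ^ 2 - 1 ≤ 201/10000 := by
        have h1 := mul_le_mul h2' h2' hS'0.le (by norm_num : (0:ℝ) ≤ 101/100)
        rw [sq]; linarith
      have hb2 : (S' ^ 2 - 1) * ε' ≤ 201/10000 * ε' :=
        mul_le_mul_of_nonneg_right hb hε'.le
      have e : 12 * (S' ^ 2 - 1) * ε' = 12 * ((S' ^ 2 - 1) * ε') := by ring
      rw [e]; linarith
end

section
/- Suppose F : (0, r₁] → ℝ satisfies |F(r)| ≤ ε(r) with ε monotone and lim_{r→0} ε(r) = 0, and u_{r,g} is a family of almost-solutions with ‖∂̄ u_{r,g}‖ ≤ ε(r) and a uniformly bounded right inverse G of the linearization with quadratic nonlinearity estimate as in the inverse function theorem (constant C independent of r, g). Then there exists r₀ > 0 such that for all 0 < r ≤ r₀ and all g ∈ U(1), there is a unique correction ξ(r,g) in Im G with ∂̄(u_{r,g} + ξ(r,g)) = 0 and ‖ξ(r,g)‖ ≤ 2C'ε(r); moreover (r,g) ↦ u_{r,g} + ξ(r,g) is injective when (r,g) ↦ u_{r,g} is injective and ε(r₀) is smaller than the separation of the family. -/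
lemma key_ift {X Z : Type*} [NormedAddCommGroup X] [NormedSpace ℝ X] [CompleteSpace X]
    [NormedAddCommGroup Z] [NormedSpace ℝ Z]
    (C C' : ℝ) (hC : 0 < C) (hC' : 0 < C')
    (F : X → Z) (u : X) (D : X →L[ℝ] Z) (G : Z →L[ℝ] X) (N : X → Z)
    (hright : ∀ ξ, D (G ξ) = ξ)
    (hexp : ∀ ξ, F (u + ξ) = F u + D ξ + N ξ)
    (hquad : ∀ ξ ζ, ‖G (N ξ) - G (N ζ)‖ ≤ C * (‖ξ‖ + ‖ζ‖) * ‖ξ - ζ‖)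
    (e : ℝ) (he : 0 ≤ e) (hsmall : 8 * C * C' * e ≤ 1)
    (herr : ‖G (F u)‖ ≤ C' * e) :
    ∃ ξ ∈ Set.range G, F (u + ξ) = 0 ∧ ‖ξ‖ ≤ 2 * C' * e ∧
      ∀ ξ' ∈ Set.range G, F (u + ξ') = 0 → ‖ξ'‖ ≤ 2 * C' * e → ξ' = ξ := by
  set ρ : ℝ := 2 * C' * e with hρ
  have hρ0 : 0 ≤ ρ := by positivity
  have hN0 : N 0 = 0 := by
    have h := hexp 0
    simp only [add_zero, map_zero] at h
    exact (left_eq_add.mp h)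
  have hcont : ∀ ξ ζ : X, ‖ξ‖ ≤ ρ → ‖ζ‖ ≤ ρ →
      ‖G (N ξ) - G (N ζ)‖ ≤ (1/2) * ‖ξ - ζ‖ := by
    intro ξ ζ hξ hζ
    refine (hquad ξ ζ).trans ?_
    have h1 : C * (‖ξ‖ + ‖ζ‖) ≤ 1/2 := by nlinarith [norm_nonneg ξ, norm_nonneg ζ]
    exact mul_le_mul_of_nonneg_right h1 (norm_nonneg _)
  set T : X → X := fun ξ => -(G (F u)) - G (N ξ) with hT
  have hTmem : ∀ ξ : X, ‖ξ‖ ≤ ρ → ‖T ξ‖ ≤ ρ := by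
    intro ξ hξ
    have h1 : ‖G (N ξ)‖ ≤ (1/2) * ‖ξ‖ := by
      have := hcont ξ 0 hξ (by simpa using hρ0)
      simpa [hN0] using this
    have h2 : ‖T ξ‖ ≤ ‖G (F u)‖ + ‖G (N ξ)‖ := by
      simpa [hT] using norm_sub_le (-(G (F u))) (G (N ξ))
    have hξ2 : (1/2) * ‖ξ‖ ≤ (1/2) * ρ := by linarith
    calc ‖T ξ‖ ≤ ‖G (F u)‖ + ‖G (N ξ)‖ := h2
      _ ≤ C' * e + (1/2) * ρ := by linarith
      _ = ρ := by rw [hρ]; ring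
  set S := Metric.closedBall (0 : X) ρ with hS
  haveI : Nonempty S := ⟨⟨0, by simp [hS, hρ0]⟩⟩
  haveI : CompleteSpace S := Metric.isClosed_closedBall.completeSpace_coe
  have memS : ∀ ξ : X, ξ ∈ S ↔ ‖ξ‖ ≤ ρ := by
    intro ξ; simp [hS, Metric.mem_closedBall, dist_zero_right]
  set f : S → S := fun ξ => ⟨T ξ.1, (memS _).mpr (hTmem ξ.1 ((memS _).mp ξ.2))⟩ with hf
  have hlip : ContractingWith (1/2 : NNReal) f := by
    constructor
    · rw [← NNReal.coe_lt_coe]; norm_num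
    · apply LipschitzWith.of_dist_le_mul
      intro x y
      have hsub : (f x).1 - (f y).1 = G (N y.1) - G (N x.1) := by
        simp only [hf, hT]; abel
      rw [Subtype.dist_eq, dist_eq_norm, hsub, norm_sub_rev, Subtype.dist_eq, dist_eq_norm]
      have := hcont x.1 y.1 ((memS _).mp x.2) ((memS _).mp y.2)
      calc ‖G (N x.1) - G (N y.1)‖ ≤ (1/2) * ‖x.1 - y.1‖ := this
        _ = ((1/2 : NNReal) : ℝ) * ‖x.1 - y.1‖ := by norm_num
  set ξ₀ : S := hlip.fixedPoint f with hξ₀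
  have hfix : T ξ₀.1 = ξ₀.1 := congrArg Subtype.val hlip.fixedPoint_isFixedPt
  have hξnorm : ‖ξ₀.1‖ ≤ ρ := (memS _).mp ξ₀.2
  have hrange : ξ₀.1 = G (-(F u) - N ξ₀.1) := by
    rw [map_sub, map_neg]; exact hfix.symm
  have hsol : F (u + ξ₀.1) = 0 := by
    rw [hexp]
    have hD : D ξ₀.1 = -(F u) - N ξ₀.1 := by
      conv_lhs => rw [hrange]
      rw [hright]
    rw [hD]; abel
  refine ⟨ξ₀.1, ⟨_, hrange.symm⟩, hsol, hξnorm, ?_⟩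
  intro ξ' hξ' hsol' hnorm'
  obtain ⟨η', hη'⟩ := hξ'
  have hDξ' : D ξ' = η' := by rw [← hη', hright]
  have h0 : F u + η' + N ξ' = 0 := by rw [← hDξ', ← hexp]; exact hsol'
  have hη'eq : η' = -(F u) - N ξ' := by
    rw [show F u + η' + N ξ' = η' - (-(F u) - N ξ') by abel] at h0
    exact sub_eq_zero.mp h0
  have hfix' : T ξ' = ξ' := by
    calc T ξ' = -(G (F u)) - G (N ξ') := rfl
      _ = G (-(F u) - N ξ') := by rw [map_sub, map_neg]
      _ = G η' := by rw [hη'eq]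
      _ = ξ' := hη'
  have hle : ‖ξ' - ξ₀.1‖ ≤ (1/2) * ‖ξ' - ξ₀.1‖ := by
    calc ‖ξ' - ξ₀.1‖ = ‖T ξ' - T ξ₀.1‖ := by rw [hfix, hfix']
      _ = ‖G (N ξ₀.1) - G (N ξ')‖ := by
          rw [show T ξ' - T ξ₀.1 = G (N ξ₀.1) - G (N ξ') by simp only [hT]; abel]
      _ ≤ (1/2) * ‖ξ₀.1 - ξ'‖ := hcont _ _ hξnorm hnorm'
      _ = (1/2) * ‖ξ' - ξ₀.1‖ := by rw [norm_sub_rev]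
  have h00 : ‖ξ' - ξ₀.1‖ ≤ 0 := by linarith
  exact sub_eq_zero.mp (norm_eq_zero.mp (le_antisymm h00 (norm_nonneg _)))


/-- Abstract form of Proposition 2.2.16: a `(0, r₁] × U(1)`-family of almost-solutions
`u_{r,g}` of `F = 0` with errors `‖F(u_{r,g})‖ ≤ ε(r) → 0` and uniformly bounded right
inverses of the linearizations (with the standard quadratic nonlinearity estimate)
admits, for all small `r`, a unique small correction `ξ(r,g) ∈ Im G_{r,g}` with
`F(u_{r,g} + ξ(r,g)) = 0` and `‖ξ(r,g)‖ ≤ 2C'ε(r)`; moreover the corrected family is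
injective provided the original family is injective with separation exceeding the
correction sizes. -/
theorem stmt_19 {X Z : Type*} [NormedAddCommGroup X] [NormedSpace ℝ X] [CompleteSpace X]
    [NormedAddCommGroup Z] [NormedSpace ℝ Z] [CompleteSpace Z]
    (r₁ C C' : ℝ) (hr₁ : 0 < r₁) (hC : 0 < C) (hC' : 0 < C')
    (F : X → Z) (u : ℝ → Circle → X)
    (D : ℝ → Circle → (X →L[ℝ] Z)) (G : ℝ → Circle → (Z →L[ℝ] X))
    (N : ℝ → Circle → X → Z)
    (hright : ∀ (r : ℝ) (g : Circle) (ξ : Z), D r g (G r g ξ) = ξ)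
    (hGnorm : ∀ (r : ℝ) (g : Circle), ‖G r g‖ ≤ C')
    (hexp : ∀ (r : ℝ) (g : Circle) (ξ : X),
      F (u r g + ξ) = F (u r g) + D r g ξ + N r g ξ)
    (hquad : ∀ (r : ℝ) (g : Circle) (ξ ζ : X),
      ‖G r g (N r g ξ) - G r g (N r g ζ)‖ ≤ C * (‖ξ‖ + ‖ζ‖) * ‖ξ - ζ‖)
    (ε : ℝ → ℝ) (hmono : MonotoneOn ε (Set.Ioc 0 r₁))
    (hlim : Filter.Tendsto ε (nhdsWithin 0 (Set.Ioi 0)) (nhds 0))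
    (hεpos : ∀ r ∈ Set.Ioc (0 : ℝ) r₁, 0 ≤ ε r)
    (herr : ∀ r ∈ Set.Ioc (0 : ℝ) r₁, ∀ g : Circle, ‖F (u r g)‖ ≤ ε r) :
    ∃ r₀ : ℝ, 0 < r₀ ∧ r₀ ≤ r₁ ∧
      (∀ r : ℝ, 0 < r → r ≤ r₀ → ∀ g : Circle,
        ∃ ξ ∈ Set.range (G r g), F (u r g + ξ) = 0 ∧ ‖ξ‖ ≤ 2 * C' * ε r ∧
          ∀ ξ' ∈ Set.range (G r g),
            F (u r g + ξ') = 0 → ‖ξ'‖ ≤ 2 * C' * ε r → ξ' = ξ) ∧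
      (∀ sep > 0,
        (∀ (r r' : ℝ) (g g' : Circle), 0 < r → r ≤ r₀ → 0 < r' → r' ≤ r₀ →
          (r, g) ≠ (r', g') → sep ≤ ‖u r g - u r' g'‖) →
        4 * C' * ε r₀ < sep →
        ∀ (r r' : ℝ) (g g' : Circle) (ξ ξ' : X),
          0 < r → r ≤ r₀ → 0 < r' → r' ≤ r₀ →
          ξ ∈ Set.range (G r g) → ξ' ∈ Set.range (G r' g') →
          F (u r g + ξ) = 0 → F (u r' g' + ξ') = 0 →
          ‖ξ‖ ≤ 2 * C' * ε r → ‖ξ'‖ ≤ 2 * C' * ε r' →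
          u r g + ξ = u r' g' + ξ' → (r, g) = (r', g')) := by
  have hb : (0:ℝ) < 1 / (8 * C * C') := by positivity
  have hev : ∀ᶠ r in nhdsWithin 0 (Set.Ioi 0), ε r < 1 / (8 * C * C') :=
    hlim.eventually (gt_mem_nhds hb)
  rw [eventually_nhdsWithin_iff, Metric.eventually_nhds_iff] at hev
  obtain ⟨δ, hδ, hδ'⟩ := hev
  set r₀ := min (δ/2) r₁ with hr₀def
  have hr₀pos : 0 < r₀ := by positivity
  have hr₀r₁ : r₀ ≤ r₁ := min_le_right _ _
  have hr₀mem : r₀ ∈ Set.Ioc (0:ℝ) r₁ := ⟨hr₀pos, hr₀r₁⟩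
  have hεr₀ : ε r₀ < 1 / (8 * C * C') := by
    apply hδ' _ (Set.mem_Ioi.mpr hr₀pos)
    rw [Real.dist_eq, sub_zero, abs_of_pos hr₀pos]
    calc r₀ ≤ δ/2 := min_le_left _ _
      _ < δ := by linarith
  have hεle : ∀ r : ℝ, 0 < r → r ≤ r₀ → ε r ≤ ε r₀ := fun r h1 h2 =>
    hmono ⟨h1, h2.trans hr₀r₁⟩ hr₀mem h2
  refine ⟨r₀, hr₀pos, hr₀r₁, ?_, ?_⟩
  · -- existence/uniqueness part
    intro r hr hrr₀ g
    have hrmem : r ∈ Set.Ioc (0:ℝ) r₁ := ⟨hr, hrr₀.trans hr₀r₁⟩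
    have hge : 0 ≤ ε r := hεpos r hrmem
    have hsmall : 8 * C * C' * ε r ≤ 1 := by
      have h1 : ε r ≤ ε r₀ := hεle r hr hrr₀
      have h2 : 8 * C * C' * ε r₀ ≤ 1 := by
        rw [lt_div_iff₀ (by positivity)] at hεr₀; nlinarith
      have h3 := mul_le_mul_of_nonneg_left h1 (by positivity : (0:ℝ) ≤ 8*C*C')
      linarith
    have herr2 : ‖G r g (F (u r g))‖ ≤ C' * ε r := by
      calc ‖G r g (F (u r g))‖ ≤ ‖G r g‖ * ‖F (u r g)‖ := (G r g).le_opNorm _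
        _ ≤ C' * ε r := by
            have h3 := herr r hrmem g
            have h4 := hGnorm r g
            nlinarith [norm_nonneg (F (u r g)), norm_nonneg (G r g)]
    exact key_ift C C' hC hC' F (u r g) (D r g) (G r g) (N r g)
      (hright r g) (hexp r g) (hquad r g) (ε r) hge hsmall herr2
  · -- injectivity part
    intro sep hsep hsepfam hsepbound r r' g g' ξ ξ' hr hrr₀ hr' hr'r₀ _ _ _ _ hnξ hnξ' heq
    by_contra hne
    have h1 : sep ≤ ‖u r g - u r' g'‖ := hsepfam r r' g g' hr hrr₀ hr' hr'r₀ hne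
    have h2 : u r g - u r' g' = ξ' - ξ := by
      have h := sub_eq_zero.mpr heq
      rw [show u r g + ξ - (u r' g' + ξ') = (u r g - u r' g') - (ξ' - ξ) by abel] at h
      exact sub_eq_zero.mp h
    have h3 : ‖ξ' - ξ‖ ≤ ‖ξ'‖ + ‖ξ‖ := norm_sub_le _ _
    have h4 : ε r ≤ ε r₀ := hεle r hr hrr₀
    have h5 : ε r' ≤ ε r₀ := hεle r' hr' hr'r₀
    rw [h2] at h1
    nlinarith
end
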